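/- arXiv:2501.17566 — 2 statements merged into one kernel-verified Lean document; each statement's English description precedes it below -/
import Mathlib

section
/- Define f(p) = (1 − 2^{−p}) ζ(p) − 2^{p−1} (1/2 + 1/(2^p − 1)) for p > 1. Then f is strictly decreasing on (1, ∞), there is a unique μ ∈ (1, ∞) with f(μ) = 0, f(p) > 0 for 1 < p < μ, and f(p) < 0 for p > μ. -/
open Finset Real Filter

/-- The n×n Cauchy–Toeplitz matrix `T_n = [2/(1+2(i-j))]`. -/
noncomputable def cauchyToeplitz (n : ℕ) : Matrix (Fin n) (Fin n) ℝ :=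
  fun i j => 2 / (1 + 2 * (((i : ℕ) : ℝ) - ((j : ℕ) : ℝ)))

/-- The ℓ_p norm of `T_n`: `(∑_{i,j} |a_{ij}|^p)^(1/p)`. -/
noncomputable def lpNorm (n : ℕ) (p : ℝ) : ℝ :=
  (∑ i : Fin n, ∑ j : Fin n, |cauchyToeplitz n i j| ^ p) ^ (1 / p)

/-- The ℓ_{p,q} norm of `T_n`: `(∑_j (∑_i |a_{ij}|^p)^(q/p))^(1/q)`. -/
noncomputable def lpqNorm (n : ℕ) (p q : ℝ) : ℝ :=
  (∑ j : Fin n, (∑ i : Fin n, |cauchyToeplitz n i j| ^ p) ^ (q / p)) ^ (1 / q)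

/-- The Riemann zeta function at a real argument (real-valued for real `p > 1`). -/
noncomputable def zetaR (p : ℝ) : ℝ := (riemannZeta p).re

noncomputable def f (p : ℝ) : ℝ :=
  (1 - 2 ^ (-p)) * zetaR p - 2 ^ (p - 1) * (1 / 2 + 1 / (2 ^ p - 1))

/-! Since `(1 - 2^{-p}) ζ(p) = ∑ₖ (2k+1)^{-p}`, writing `t = 2^p` gives
`f p = 1 + 3^{-p} + 5^{-p} + 7^{-p} - t(t+1)/(4(t-1)) + ∑ₖ (2k+9)^{-p}`.
The tail is antitone. The finite part has negative derivative: for `p ≥ 3/2` the rational term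
increases with `t`, and for `p < 3/2` the slope of the rational term is below `(log 2)/2`, which the
derivatives of `3^{-p}, 5^{-p}, 7^{-p}` outweigh. As the finite part is positive at `p = 1` and
`f 2 = π²/8 - 5/3 < 0`, the intermediate value theorem produces the zero, and strict
monotonicity makes it unique and gives the signs on either side. -/

open Topology

lemma hasSum_zetaR {p : ℝ} (hp : 1 < p) :
    HasSum (fun n : ℕ => ((n : ℝ) + 1) ^ (-p)) (zetaR p) := by
  have hsum : Summable (fun n : ℕ => ((n : ℝ) + 1) ^ (-p)) := by
    simpa using (summable_nat_add_iff 1).2 (Real.summable_nat_rpow.2 (neg_lt_neg hp))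
  have hζ := zeta_eq_tsum_one_div_nat_add_one_cpow (s := p) (by simpa using hp)
  have hterm (n : ℕ) : 1 / ((n : ℂ) + 1) ^ (p : ℂ) = (((n : ℝ) + 1) ^ (-p) : ℝ) := by
    rw [Real.rpow_neg (by positivity), Complex.ofReal_inv,
      Complex.ofReal_cpow (by positivity), one_div]
    push_cast; rfl
  convert hsum.hasSum
  rw [zetaR, hζ, tsum_congr hterm, ← Complex.ofReal_tsum, Complex.ofReal_re]

lemma hasSum_odd_rpow_neg {p : ℝ} (hp : 1 < p) :
    HasSum (fun k : ℕ => (2 * (k : ℝ) + 1) ^ (-p)) ((1 - 2 ^ (-p)) * zetaR p) := by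
  have hζ := hasSum_zetaR hp
  have hodd : HasSum (fun k : ℕ => (((2 * k + 1 : ℕ) : ℝ) + 1) ^ (-p)) (2 ^ (-p) * zetaR p) := by
    refine (hζ.mul_left (2 ^ (-p))).congr_fun fun k => ?_
    rw [← Real.mul_rpow (by norm_num) (by positivity)]
    push_cast; ring_nf
  have heven := (hζ.summable.comp_injective (mul_right_injective₀ two_ne_zero)).hasSum
  have hsplit := hζ.unique (heven.even_add_odd hodd)
  rw [sub_mul, one_mul, ← eq_sub_of_add_eq hsplit.symm]
  exact heven.congr_fun fun k => by simp

noncomputable def rationalPart (t : ℝ) : ℝ := t * (t + 1) / (4 * (t - 1))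

noncomputable def fHead (p : ℝ) : ℝ :=
  1 + 3 ^ (-p) + 5 ^ (-p) + 7 ^ (-p) - rationalPart (2 ^ p)

noncomputable def fTail (p : ℝ) : ℝ := ∑' k : ℕ, (2 * (k : ℝ) + 9) ^ (-p)

lemma two_rpow_sub_one_mul_eq_rationalPart {p : ℝ} (hp : 0 < p) :
    (2 : ℝ) ^ (p - 1) * (1 / 2 + 1 / (2 ^ p - 1)) = rationalPart (2 ^ p) := by
  have h := sub_ne_zero.2 (Real.one_lt_rpow one_lt_two hp).ne'
  rw [Real.rpow_sub_one two_ne_zero, rationalPart]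
  field_simp
  ring

lemma f_eq_fHead_add_fTail {p : ℝ} (hp : 1 < p) : f p = fHead p + fTail p := by
  have hodd := hasSum_odd_rpow_neg hp
  have hsplit := hodd.summable.sum_add_tsum_nat_add 4
  rw [f, hodd.tsum_eq.symm.trans hsplit.symm,
    two_rpow_sub_one_mul_eq_rationalPart (zero_lt_one.trans hp), fHead, fTail]
  simp only [Finset.sum_range_succ, Finset.sum_range_zero]
  norm_num
  ring_nf

lemma fTail_nonneg (p : ℝ) : 0 ≤ fTail p :=
  tsum_nonneg fun k => Real.rpow_nonneg (by positivity) _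

lemma antitoneOn_fTail : AntitoneOn fTail (Set.Ioi 1) := fun p hp q hq hpq => by
  have hsum {s : ℝ} (hs : 1 < s) : Summable (fun k : ℕ => (2 * (k : ℝ) + 9) ^ (-s)) := by
    refine ((summable_nat_add_iff 4).2 (hasSum_odd_rpow_neg hs).summable).congr fun k => ?_
    push_cast; ring_nf
  exact (hsum hq).tsum_le_tsum
    (fun k => Real.rpow_le_rpow_of_exponent_le (by linarith [k.cast_nonneg (α := ℝ)])
      (neg_le_neg hpq))
    (hsum hp)

lemma hasDerivAt_const_rpow_neg {a : ℝ} (ha : 0 < a) (x : ℝ) :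
    HasDerivAt (fun y => a ^ (-y)) (-(Real.log a * a ^ (-x))) x := by
  have := (Real.hasStrictDerivAt_const_rpow ha (-x)).hasDerivAt.comp x (hasDerivAt_neg x)
  exact this.congr_deriv (by ring)

lemma hasDerivAt_rationalPart {t : ℝ} (ht : t ≠ 1) :
    HasDerivAt rationalPart ((t ^ 2 - 2 * t - 1) / (4 * (t - 1) ^ 2)) t := by
  have h := sub_ne_zero.2 ht
  have := ((hasDerivAt_id' t).mul ((hasDerivAt_id' t).add_const 1)).div
    (((hasDerivAt_id' t).sub_const 1).const_mul 4) (by simpa using h)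
  refine this.congr_deriv ?_
  simp only [Pi.mul_apply]
  field_simp
  ring

lemma hasDerivAt_fHead {p : ℝ} (hp : 0 < p) :
    HasDerivAt fHead
      (-(Real.log 3 * 3 ^ (-p) + Real.log 5 * 5 ^ (-p) + Real.log 7 * 7 ^ (-p))
        - ((2 ^ p) ^ 2 - 2 * 2 ^ p - 1) / (4 * (2 ^ p - 1) ^ 2) * (2 ^ p * Real.log 2)) p := by
  have hrat := (hasDerivAt_rationalPart (Real.one_lt_rpow one_lt_two hp).ne').comp p
    (Real.hasStrictDerivAt_const_rpow two_pos p).hasDerivAt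
  have := ((((hasDerivAt_const p 1).add (hasDerivAt_const_rpow_neg three_pos p)).add
    (hasDerivAt_const_rpow_neg (by norm_num : (0 : ℝ) < 5) p)).add
    (hasDerivAt_const_rpow_neg (by norm_num : (0 : ℝ) < 7) p)).sub hrat
  exact this.congr_deriv (by ring)

lemma log_div_lt_log_mul_rpow_neg {n c p : ℝ} (hn : 1 < n) (hc : 0 < c) (hnc : n ^ 3 ≤ c ^ 2)
    (hp : p < 3 / 2) : Real.log n / c < Real.log n * n ^ (-p) := by
  have hn32 : n ^ (3 / 2 : ℝ) ≤ c := by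
    rw [show (3 / 2 : ℝ) = (3 : ℕ) * (1 / 2) by norm_num, Real.rpow_mul (by linarith),
      Real.rpow_natCast, ← Real.sqrt_eq_rpow, Real.sqrt_le_left hc.le]
    exact hnc
  calc Real.log n / c = Real.log n * c⁻¹ := div_eq_mul_inv _ _
    _ ≤ Real.log n * n ^ (-(3 / 2 : ℝ)) := by
      rw [Real.rpow_neg (by linarith)]
      gcongr
      exact (Real.log_pos hn).le
    _ < Real.log n * n ^ (-p) := by
      gcongr
      · exact Real.log_pos hn
      · exact Real.rpow_lt_rpow_of_exponent_lt hn (by linarith)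

lemma log_two_div_two_lt {p : ℝ} (hp : p < 3 / 2) :
    Real.log 2 / 2 < Real.log 3 * 3 ^ (-p) + Real.log 5 * 5 ^ (-p) + Real.log 7 * 7 ^ (-p) := by
  have h3 := log_div_lt_log_mul_rpow_neg (n := 3) (c := 21 / 4)
    (by norm_num) (by norm_num) (by norm_num) hp
  have h5 := log_div_lt_log_mul_rpow_neg (n := 5) (c := 23 / 2)
    (by norm_num) (by norm_num) (by norm_num) hp
  have h7 := log_div_lt_log_mul_rpow_neg (n := 7) (c := 19)
    (by norm_num) (by norm_num) (by norm_num) hp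
  have hlog (m n : ℕ) (a : ℝ) (ha : 0 < a) (h : 2 ^ m ≤ a ^ n) :
      m * Real.log 2 ≤ n * Real.log a := by
    simpa [Real.log_pow] using Real.log_le_log (by positivity) h
  have l3 := hlog 3 2 3 (by norm_num) (by norm_num)
  have l5 := hlog 2 1 5 (by norm_num) (by norm_num)
  have l7 := hlog 2 1 7 (by norm_num) (by norm_num)
  push_cast at l3 l5 l7
  linarith [Real.log_pos one_lt_two]

lemma deriv_fHead_neg {p : ℝ} (hp : 1 < p) : deriv fHead p < 0 := by
  rw [(hasDerivAt_fHead (zero_lt_one.trans hp)).deriv]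
  set t : ℝ := 2 ^ p with ht
  have hlog2 := Real.log_pos one_lt_two
  have hpos : 0 < Real.log 3 * 3 ^ (-p) + Real.log 5 * 5 ^ (-p) + Real.log 7 * 7 ^ (-p) := by
    have := Real.log_pos (by norm_num : (1 : ℝ) < 3)
    have := Real.log_pos (by norm_num : (1 : ℝ) < 5)
    have := Real.log_pos (by norm_num : (1 : ℝ) < 7)
    positivity
  rcases lt_or_ge p (3 / 2) with hp32 | hp32
  · have htwo : 2 < t := by
      simpa using Real.rpow_lt_rpow_of_exponent_lt one_lt_two hp
    have hrat : -(1 / 2) < (t ^ 2 - 2 * t - 1) / (4 * (t - 1) ^ 2) * t := by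
      rw [div_mul_eq_mul_div, lt_div_iff₀ (by nlinarith)]
      nlinarith
    nlinarith [log_two_div_two_lt hp32]
  · have ht_sq : 8 ≤ t ^ 2 := by
      rw [ht, ← Real.rpow_natCast, ← Real.rpow_mul zero_le_two]
      calc (8 : ℝ) = 2 ^ (3 : ℝ) := by norm_num
        _ ≤ 2 ^ (p * (2 : ℕ)) :=
          Real.rpow_le_rpow_of_exponent_le one_le_two (by push_cast; linarith)
    have ht0 : 0 < t := by positivity
    have hrat : 0 ≤ (t ^ 2 - 2 * t - 1) / (4 * (t - 1) ^ 2) :=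
      div_nonneg (by nlinarith) (by positivity)
    nlinarith [mul_nonneg hrat (mul_pos ht0 hlog2).le]

lemma strictAntiOn_fHead : StrictAntiOn fHead (Set.Ioi 1) :=
  strictAntiOn_of_deriv_neg (convex_Ioi 1)
    (fun _ hp => (hasDerivAt_fHead (zero_lt_one.trans hp)).continuousAt.continuousWithinAt)
    (fun _ hp => deriv_fHead_neg (by simpa using hp))

lemma strictAntiOn_f : StrictAntiOn f (Set.Ioi 1) := fun p hp q hq hpq => by
  rw [f_eq_fHead_add_fTail hp, f_eq_fHead_add_fTail hq]
  exact add_lt_add_of_lt_of_le (strictAntiOn_fHead hp hq hpq) (antitoneOn_fTail hp hq hpq.le)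

lemma exists_f_pos : ∃ a ∈ Set.Ioo (1 : ℝ) 2, 0 < f a := by
  have hhead : 0 < fHead 1 := by norm_num [fHead, rationalPart]
  have hcont := (hasDerivAt_fHead zero_lt_one).continuousAt
  have hnear : ∀ᶠ p in 𝓝[>] (1 : ℝ), 0 < fHead p ∧ p < 2 :=
    ((hcont.eventually (eventually_gt_nhds hhead)).and
      (eventually_lt_nhds one_lt_two)).filter_mono nhdsWithin_le_nhds
  obtain ⟨a, ⟨hfa, ha2⟩, ha1⟩ := (hnear.and self_mem_nhdsWithin).exists
  exact ⟨a, ⟨ha1, ha2⟩, f_eq_fHead_add_fTail ha1 ▸ add_pos_of_pos_of_nonneg hfa (fTail_nonneg a)⟩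

lemma f_two_neg : f 2 < 0 := by
  have hζ : zetaR 2 = π ^ 2 / 6 := by
    rw [zetaR, show ((2 : ℝ) : ℂ) = 2 by norm_num, riemannZeta_two]
    norm_cast
  rw [f, hζ]
  norm_num
  nlinarith [Real.pi_lt_d2, Real.pi_pos]

lemma continuousAt_zetaR {p : ℝ} (hp : p ≠ 1) : ContinuousAt zetaR p :=
  Complex.continuous_re.continuousAt.comp
    ((differentiableAt_riemannZeta (by exact_mod_cast hp)).continuousAt.comp
      Complex.continuous_ofReal.continuousAt)

lemma continuousOn_f : ContinuousOn f (Set.Ioi 1) := fun p hp => by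
  have h2 := sub_ne_zero.2 (Real.one_lt_rpow one_lt_two (zero_lt_one.trans hp)).ne'
  have := continuousAt_zetaR (ne_of_gt hp)
  unfold f
  fun_prop (disch := first | assumption | norm_num)

theorem stmt_6 :
    StrictAntiOn f (Set.Ioi 1) ∧
    (∃! μ : ℝ, μ ∈ Set.Ioi (1 : ℝ) ∧ f μ = 0) ∧
    ∀ μ : ℝ, μ ∈ Set.Ioi (1 : ℝ) → f μ = 0 →
      (∀ p : ℝ, 1 < p → p < μ → 0 < f p) ∧
      (∀ p : ℝ, μ < p → f p < 0) := by
  have hanti := strictAntiOn_f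
  obtain ⟨a, ⟨ha1, ha2⟩, hfa⟩ := exists_f_pos
  obtain ⟨μ, hμ, hfμ⟩ := intermediate_value_Ioo' ha2.le
    (continuousOn_f.mono fun p hp => ha1.trans_le hp.1) ⟨f_two_neg, hfa⟩
  have hμ1 : μ ∈ Set.Ioi (1 : ℝ) := ha1.trans hμ.1
  refine ⟨hanti, ⟨μ, ⟨hμ1, hfμ⟩, fun ν hν => hanti.injOn hν.1 hμ1 (hν.2.trans hfμ.symm)⟩, ?_⟩
  intro ν hν hfν
  exact ⟨fun p hp hpν => hfν ▸ hanti hp hν hpν, fun p hνp => hfν ▸ hanti hν (hν.trans hνp) hνp⟩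
end

section
/- Let p > 1 satisfy (1 − 2^{−p}) ζ(p) > 2^{p−1} (1/2 + 1/(2^p − 1)). Then there exists a positive integer N ≥ 7 such that n^{−1/p} ‖T_n‖_p ≤ 4 (1/2 + 1/(2^p − 1))^{1/p} for all 1 ≤ n ≤ N, and n^{−1/p} ‖T_n‖_p ≥ 4 (1/2 + 1/(2^p − 1))^{1/p} for all n ≥ N + 1. -/
open Finset Real Filter

/-!
Write `S_n = ‖T_n‖_p^p`. The entries of `T_n` on the `d`-th diagonal below the main one, and on
the `(d+1)`-st above it, have `|·|^p = w_d = (2/(2d+1))^p`. Bordering `T_n` to `T_{n+1}` therefore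
adds `W_{n+1} + W_n` to `S_n`, where `W_n = ∑_{d<n} w_d`, so `S_n/n` is the Cesàro mean of the
increasing sequence `W_{m+1} + W_m`: it is nondecreasing in `n` and tends to
`2 ∑ w_d = 2^{p+1} (1 - 2^{-p}) ζ(p)`. The hypothesis says that this limit exceeds
`B = 4^p (1/2 + 1/(2^p - 1))`, whereas `S_7/7 ≤ B`; hence `N` is the last index with
`S_N/N ≤ B`, and taking `p`-th roots gives both inequalities.
-/

open Topology

theorem Monotone.inv_mul_sum_range {a : ℕ → ℝ} (ha : Monotone a) (h0 : 0 ≤ a 0) :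
    Monotone fun n : ℕ => (n : ℝ)⁻¹ * ∑ m ∈ range n, a m := by
  refine monotone_nat_of_le_succ fun n => ?_
  rcases n.eq_zero_or_pos with rfl | hn
  · simpa using h0
  have hsum : ∑ m ∈ range n, a m ≤ n * a n := by
    simpa using sum_le_card_nsmul (range n) a (a n) fun m hm => ha (mem_range.1 hm).le
  simp only [← div_eq_inv_mul, sum_range_succ, Nat.cast_succ]
  rw [div_le_div_iff₀ (by positivity) (by positivity)]
  nlinarith

theorem Monotone.exists_forall_le_forall_lt {α : Type*} [LinearOrder α] {f : ℕ → α}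
    (hf : Monotone f) {b : α} {k : ℕ} (hk : f k ≤ b) (hb : ∃ n, b < f n) :
    ∃ N, k ≤ N ∧ (∀ n ≤ N, f n ≤ b) ∧ ∀ n, N + 1 ≤ n → b < f n := by
  classical
  have hk_lt : k < Nat.find hb := by
    by_contra! h
    exact (Nat.find_spec hb).not_ge ((hf h).trans hk)
  exact ⟨Nat.find hb - 1, by omega, fun n hn => not_lt.1 (Nat.find_min hb (by omega)),
    fun n hn => (Nat.find_spec hb).trans_le (hf (by omega))⟩

theorem two_lt_two_rpow {p : ℝ} (hp : 1 < p) : 2 < (2 : ℝ) ^ p := by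
  simpa using rpow_lt_rpow_of_exponent_lt one_lt_two hp

theorem four_rpow_eq_sq (p : ℝ) : (4 : ℝ) ^ p = (2 ^ p) ^ 2 := by
  rw [sq, ← mul_rpow zero_le_two zero_le_two]
  norm_num

theorem four_mul_rpow_one_div {p c : ℝ} (hc : 0 ≤ c) (hp : p ≠ 0) :
    4 * c ^ (1 / p) = (4 ^ p * c) ^ (1 / p) := by
  rw [mul_rpow (by positivity) hc, ← rpow_mul zero_le_four, mul_one_div_cancel hp, rpow_one]

theorem hasSum_one_div_nat_rpow_zetaR {p : ℝ} (hp : 1 < p) :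
    HasSum (fun n : ℕ => 1 / (n : ℝ) ^ p) (zetaR p) := by
  have hs : 1 < (p : ℂ).re := by simpa using hp
  convert (Real.summable_one_div_nat_rpow.2 hp).hasSum
  rw [zetaR, zeta_eq_tsum_one_div_nat_cpow hs]
  have hterm (n : ℕ) : 1 / (n : ℂ) ^ (p : ℂ) = ((1 / (n : ℝ) ^ p : ℝ) : ℂ) := by
    rw [Complex.ofReal_div, Complex.ofReal_one, Complex.ofReal_cpow n.cast_nonneg,
      Complex.ofReal_natCast]
  simp_rw [hterm, ← Complex.ofReal_tsum, Complex.ofReal_re]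

theorem hasSum_one_div_two_mul_add_one_rpow {p : ℝ} (hp : 1 < p) :
    HasSum (fun k : ℕ => 1 / (2 * k + 1 : ℝ) ^ p) ((1 - 2 ^ (-p)) * zetaR p) := by
  have hζ := hasSum_one_div_nat_rpow_zetaR hp
  have heven : HasSum (fun k : ℕ => 1 / ((2 * k : ℕ) : ℝ) ^ p) (2 ^ (-p) * zetaR p) := by
    refine (hζ.mul_left _).congr_fun fun k => ?_
    push_cast
    rw [mul_rpow zero_le_two k.cast_nonneg, rpow_neg zero_le_two]
    simp only [one_div, mul_inv]
  have hodd : Summable fun k : ℕ => 1 / ((2 * k + 1 : ℕ) : ℝ) ^ p :=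
    hζ.summable.comp_injective (i := fun k => 2 * k + 1) fun a b hab => by simpa using hab
  have hsplit :=
    (HasSum.even_add_odd (f := fun n : ℕ => 1 / (n : ℝ) ^ p) heven hodd.hasSum).unique hζ
  have hodd_sum := hodd.hasSum
  push_cast at hodd_sum hsplit
  convert hodd_sum using 1
  linear_combination (-1 : ℝ) * hsplit

namespace CauchyToeplitz

variable {p : ℝ}

-- `|(T_n)_{ij}|^p`, which does not depend on `n`
noncomputable def absEntryRpow (p : ℝ) (i j : ℕ) : ℝ := |2 / (1 + 2 * ((i : ℝ) - j))| ^ p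

noncomputable def weight (p : ℝ) (d : ℕ) : ℝ := (2 / (2 * d + 1)) ^ p

noncomputable def partialWeight (p : ℝ) (n : ℕ) : ℝ := ∑ d ∈ range n, weight p d

noncomputable def sumAbsRpow (n : ℕ) (p : ℝ) : ℝ :=
  ∑ i : Fin n, ∑ j : Fin n, |cauchyToeplitz n i j| ^ p

theorem absEntryRpow_of_le (p : ℝ) {i j : ℕ} (h : j ≤ i) :
    absEntryRpow p i j = weight p (i - j) := by
  have hji : (j : ℝ) ≤ i := by exact_mod_cast h
  rw [absEntryRpow, weight, Nat.cast_sub h, abs_of_pos (div_pos two_pos (by linarith))]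
  ring_nf

theorem absEntryRpow_of_lt (p : ℝ) {i j : ℕ} (h : i < j) :
    absEntryRpow p i j = weight p (j - i - 1) := by
  have hij : (i : ℝ) + 1 ≤ j := by exact_mod_cast h
  rw [absEntryRpow, weight, abs_div, abs_two, abs_of_neg (by linarith), Nat.sub_sub,
    Nat.cast_sub (by omega)]
  push_cast
  ring_nf

theorem weight_pos (p : ℝ) (d : ℕ) : 0 < weight p d := by
  unfold weight; positivity

theorem monotone_partialWeight (p : ℝ) : Monotone (partialWeight p) := fun _ _ hmn =>
  sum_le_sum_of_subset_of_nonneg (range_subset_range.2 hmn) fun d _ _ => (weight_pos p d).le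

theorem partialWeight_nonneg (p : ℝ) (n : ℕ) : 0 ≤ partialWeight p n :=
  sum_nonneg fun d _ => (weight_pos p d).le

theorem sum_absEntryRpow_row (p : ℝ) (n : ℕ) :
    ∑ j ∈ range (n + 1), absEntryRpow p n j = partialWeight p (n + 1) := by
  rw [sum_congr rfl fun j hj => absEntryRpow_of_le p (Nat.lt_succ_iff.1 (mem_range.1 hj))]
  simpa [partialWeight] using sum_range_reflect (weight p) (n + 1)

theorem sum_absEntryRpow_col (p : ℝ) (n : ℕ) :
    ∑ i ∈ range n, absEntryRpow p i n = partialWeight p n := by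
  rw [sum_congr rfl fun i hi => absEntryRpow_of_lt p (mem_range.1 hi)]
  rw [partialWeight, ← sum_range_reflect (weight p) n]
  exact sum_congr rfl fun i _ => by rw [Nat.sub_right_comm]

theorem sumAbsRpow_eq_sum_absEntryRpow (n : ℕ) (p : ℝ) :
    sumAbsRpow n p = ∑ i ∈ range n, ∑ j ∈ range n, absEntryRpow p i j := by
  simp only [sumAbsRpow, ← Fin.sum_univ_eq_sum_range]
  rfl

theorem sumAbsRpow_eq_sum_partialWeight (n : ℕ) (p : ℝ) :
    sumAbsRpow n p = ∑ m ∈ range n, (partialWeight p (m + 1) + partialWeight p m) := by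
  rw [sumAbsRpow_eq_sum_absEntryRpow]
  induction n with
  | zero => simp
  | succ n ih =>
    have hsplit : ∑ i ∈ range (n + 1), ∑ j ∈ range (n + 1), absEntryRpow p i j =
        ∑ i ∈ range n, ∑ j ∈ range n, absEntryRpow p i j +
          (∑ j ∈ range (n + 1), absEntryRpow p n j +
            ∑ i ∈ range n, absEntryRpow p i n) := by
      simp only [sum_range_succ _ n, sum_add_distrib]
      ring
    rw [hsplit, ih, sum_absEntryRpow_row, sum_absEntryRpow_col, sum_range_succ]

theorem weight_le (hp : 1 ≤ p) (d : ℕ) : weight p d ≤ 2 ^ (p - 1) * weight 1 d := by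
  have h0 : 0 < (2 : ℝ) / (2 * d + 1) := by positivity
  have h2 : (2 : ℝ) / (2 * d + 1) ≤ 2 :=
    div_le_self zero_le_two (by linarith [(Nat.cast_nonneg d : (0 : ℝ) ≤ d)])
  rw [weight, weight, rpow_one, ← div_le_iff₀ h0, ← rpow_sub_one h0.ne']
  exact rpow_le_rpow h0.le h2 (by linarith)

theorem sumAbsRpow_le (hp : 1 ≤ p) (n : ℕ) :
    sumAbsRpow n p ≤ 2 ^ (p - 1) * sumAbsRpow n 1 := by
  have hpartial (m : ℕ) : partialWeight p m ≤ 2 ^ (p - 1) * partialWeight 1 m := by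
    rw [partialWeight, partialWeight, mul_sum]
    exact sum_le_sum fun d _ => weight_le hp d
  rw [sumAbsRpow_eq_sum_partialWeight, sumAbsRpow_eq_sum_partialWeight, mul_sum]
  exact sum_le_sum fun m _ => by rw [mul_add]; exact add_le_add (hpartial _) (hpartial _)

theorem sumAbsRpow_seven_one : sumAbsRpow 7 1 = 262186 / 6435 := by
  simp only [sumAbsRpow_eq_sum_partialWeight, partialWeight, weight, sum_range_succ, rpow_one]
  norm_num

theorem sumAbsRpow_nonneg (n : ℕ) (p : ℝ) : 0 ≤ sumAbsRpow n p := by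
  unfold sumAbsRpow; positivity

theorem inv_mul_sumAbsRpow_seven_le (hp : 1 < p) :
    (7 : ℝ)⁻¹ * sumAbsRpow 7 p ≤ 4 ^ p * (1 / 2 + 1 / (2 ^ p - 1)) := by
  obtain ⟨y, hy, hy_eq⟩ : ∃ y : ℝ, 1 < y ∧ 2 ^ p = y + 1 :=
    ⟨2 ^ p - 1, by linarith [two_lt_two_rpow hp], by ring⟩
  -- AM-GM would give `√2`; a rational value below it suffices
  have hamgm : 1.414 ≤ y / 2 + 1 / y := by
    rw [div_add_div _ _ two_ne_zero (by positivity), le_div_iff₀ (by positivity)]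
    nlinarith [sq_nonneg (y - 1.414)]
  have hrhs : 4 ^ p * (1 / 2 + 1 / (2 ^ p - 1)) = (y + 1) * (3 / 2 + (y / 2 + 1 / y)) := by
    have hy0 : y ≠ 0 := by positivity
    rw [four_rpow_eq_sq, hy_eq, add_sub_cancel_right]
    field_simp
    ring
  rw [inv_mul_le_iff₀ (by norm_num), hrhs]
  calc sumAbsRpow 7 p ≤ 2 ^ (p - 1) * sumAbsRpow 7 1 := sumAbsRpow_le hp.le 7
    _ = 262186 / 6435 / 2 * (y + 1) := by
        rw [sumAbsRpow_seven_one, rpow_sub_one two_ne_zero, hy_eq]; ring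
    _ ≤ 7 * ((y + 1) * (3 / 2 + (y / 2 + 1 / y))) := by nlinarith

theorem hasSum_weight (hp : 1 < p) : HasSum (weight p) (2 ^ p * ((1 - 2 ^ (-p)) * zetaR p)) := by
  refine ((hasSum_one_div_two_mul_add_one_rpow hp).mul_left (2 ^ p)).congr_fun fun d => ?_
  rw [weight, div_rpow zero_le_two (by positivity), mul_one_div]

theorem tendsto_inv_mul_sumAbsRpow {L : ℝ} (h : HasSum (weight p) L) :
    Tendsto (fun n : ℕ => (n : ℝ)⁻¹ * sumAbsRpow n p) atTop (𝓝 (2 * L)) := by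
  simp only [sumAbsRpow_eq_sum_partialWeight]
  refine Tendsto.cesaro ?_
  rw [two_mul]
  exact (h.tendsto_sum_nat.comp (tendsto_add_atTop_nat 1)).add h.tendsto_sum_nat

theorem monotone_inv_mul_sumAbsRpow (p : ℝ) :
    Monotone fun n : ℕ => (n : ℝ)⁻¹ * sumAbsRpow n p := by
  simp only [sumAbsRpow_eq_sum_partialWeight]
  refine Monotone.inv_mul_sum_range (fun m n hmn => ?_) ?_
  · exact add_le_add (monotone_partialWeight p (by omega)) (monotone_partialWeight p hmn)
  · exact add_nonneg (partialWeight_nonneg p 1) (partialWeight_nonneg p 0)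

theorem four_rpow_mul_lt {c : ℝ} (h : 2 ^ (p - 1) * c < (1 - 2 ^ (-p)) * zetaR p) :
    4 ^ p * c < 2 * (2 ^ p * ((1 - 2 ^ (-p)) * zetaR p)) :=
  calc 4 ^ p * c = 2 * 2 ^ p * (2 ^ (p - 1) * c) := by
        rw [four_rpow_eq_sq, rpow_sub_one two_ne_zero]; ring
    _ < 2 * 2 ^ p * ((1 - 2 ^ (-p)) * zetaR p) := mul_lt_mul_of_pos_left h (by positivity)
    _ = _ := by ring

theorem rpow_neg_mul_lpNorm (n : ℕ) (p : ℝ) :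
    (n : ℝ) ^ (-(1 / p)) * lpNorm n p = ((n : ℝ)⁻¹ * sumAbsRpow n p) ^ (1 / p) := by
  rw [mul_rpow (inv_nonneg.2 n.cast_nonneg) (sumAbsRpow_nonneg n p), inv_rpow n.cast_nonneg,
    rpow_neg n.cast_nonneg]
  rfl

end CauchyToeplitz

open CauchyToeplitz in
theorem stmt_18 (p : ℝ) (hp : 1 < p)
    (h : 2 ^ (p - 1) * (1 / 2 + 1 / (2 ^ p - 1)) < (1 - 2 ^ (-p)) * zetaR p) :
    ∃ N : ℕ, 7 ≤ N ∧
      (∀ n : ℕ, 1 ≤ n → n ≤ N →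
        (n : ℝ) ^ (-(1 / p)) * lpNorm n p ≤ 4 * (1 / 2 + 1 / (2 ^ p - 1)) ^ (1 / p)) ∧
      (∀ n : ℕ, N + 1 ≤ n →
        4 * (1 / 2 + 1 / (2 ^ p - 1)) ^ (1 / p) ≤ (n : ℝ) ^ (-(1 / p)) * lpNorm n p) := by
  have hc : 0 ≤ 1 / 2 + 1 / ((2 : ℝ) ^ p - 1) :=
    add_nonneg (by norm_num) (one_div_nonneg.2 (by linarith [two_lt_two_rpow hp]))
  have hp0 : 0 < 1 / p := by positivity
  obtain ⟨N, h7N, hle, hlt⟩ := (monotone_inv_mul_sumAbsRpow p).exists_forall_le_forall_lt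
    (inv_mul_sumAbsRpow_seven_le hp)
    ((tendsto_inv_mul_sumAbsRpow (hasSum_weight hp)).eventually_const_lt
      (four_rpow_mul_lt h)).exists
  refine ⟨N, h7N, fun n _ hn => ?_, fun n hn => ?_⟩
  · rw [rpow_neg_mul_lpNorm, four_mul_rpow_one_div hc (by positivity)]
    exact rpow_le_rpow (mul_nonneg (by positivity) (sumAbsRpow_nonneg n p)) (hle n hn) hp0.le
  · rw [rpow_neg_mul_lpNorm, four_mul_rpow_one_div hc (by positivity)]
    exact rpow_le_rpow (by positivity) (hlt n hn).le hp0.le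
end
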